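/- The elements P'_n of NSymm defined recursively by P'_n = nZ_n - (P'_1 Z_{n-1} + P'_2 Z_{n-2} + ... + P'_{n-1} Z_1) are primitive elements of NSymm. -/

import Mathlib

open TensorProduct

attribute [local instance high] Algebra.toModule

/-- `NSymm` is the free associative algebra `ℤ⟨Z_1, Z_2, ...⟩`. -/
noncomputable abbrev NSymm : Type := FreeAlgebra ℤ ℕ

/-- `Z 0 = 1` and `Z (n+1)` is the generator `Z_{n+1}` of `NSymm`. -/
noncomputable def Z : ℕ → NSymm
  | 0 => 1
  | n + 1 => FreeAlgebra.ι ℤ n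

/-- The comultiplication of `NSymm`: the algebra homomorphism with
`μ(Z_n) = Σ_{i+j=n} Z_i ⊗ Z_j`. -/
noncomputable def mu : NSymm →ₐ[ℤ] NSymm ⊗[ℤ] NSymm :=
  FreeAlgebra.lift ℤ fun n => ∑ i ∈ Finset.range (n + 2), Z i ⊗ₜ[ℤ] Z (n + 1 - i)

/-- The elements `P'`, defined by the recursion
`P' n = n Z_n - (P'_1 Z_{n-1} + P'_2 Z_{n-2} + ⋯ + P'_{n-1} Z_1)` (and `P' 0 = 0`). -/
noncomputable def P' : ℕ → NSymm
  | 0 => 0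
  | n + 1 =>
    (n + 1) • Z (n + 1) - ∑ i ∈ (Finset.range n).attach, P' (i.1 + 1) * Z (n - i.1)
  decreasing_by exact Nat.succ_lt_succ (Finset.mem_range.mp i.2)

/-!
Unfolding the recursion gives Newton's identity `∑_{i+j=n} P'_i Z_j = n Z_n`. Apply `mu` to it.
Since `mu (Z_j) = ∑_{a+b=j} Z_a ⊗ Z_b`, Newton's identity in the left and in the right tensor
factor shows that replacing each `mu (P'_i)` by `P'_i ⊗ 1 + 1 ⊗ P'_i` also yields
`∑_{a+b=n} (a + b) Z_a ⊗ Z_b = n mu (Z_n)`. By strong induction the two sums agree in every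
term with `i < n`, so they agree in the remaining term `i = n` as well.
-/

open Finset

section Antidiagonal

variable {A M : Type*} [AddCommMonoid A] [HasAntidiagonal A] [AddCommMonoid M]

lemma sum_antidiagonal_sum_antidiagonal_snd (n : A) (f : A → A → A → M) :
    ∑ p ∈ antidiagonal n, ∑ q ∈ antidiagonal p.2, f p.1 q.1 q.2 =
      ∑ p ∈ antidiagonal n, ∑ q ∈ antidiagonal p.1, f q.1 q.2 p.2 := by
  simp only [sum_sigma']
  apply sum_nbij' (fun ⟨⟨i, _⟩, ⟨j, k⟩⟩ ↦ ⟨(i + j, k), (i, j)⟩)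
    (fun ⟨⟨_, k⟩, ⟨i, j⟩⟩ ↦ ⟨(i, j + k), (j, k)⟩) <;> aesop (add simp [add_assoc])

lemma sum_antidiagonal_sum_antidiagonal_snd_left_comm (n : A) (f : A → A → A → M) :
    ∑ p ∈ antidiagonal n, ∑ q ∈ antidiagonal p.2, f p.1 q.1 q.2 =
      ∑ p ∈ antidiagonal n, ∑ q ∈ antidiagonal p.2, f q.1 p.1 q.2 := by
  simp only [sum_sigma']
  apply sum_nbij' (fun ⟨⟨i, _⟩, ⟨j, k⟩⟩ ↦ ⟨(j, i + k), (i, k)⟩)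
    (fun ⟨⟨j, _⟩, ⟨i, k⟩⟩ ↦ ⟨(i, j + k), (j, k)⟩) <;> aesop (add simp [add_left_comm])

end Antidiagonal

lemma P'_zero : P' 0 = 0 := by rw [P']

lemma P'_succ (n : ℕ) :
    P' (n + 1) = (n + 1) • Z (n + 1) - ∑ i ∈ range n, P' (i + 1) * Z (n - i) := by
  rw [P', sum_attach (range n) fun i => P' (i + 1) * Z (n - i)]

lemma sum_antidiagonal_P'_mul_Z (n : ℕ) :
    ∑ p ∈ antidiagonal n, P' p.1 * Z p.2 = n • Z n := by
  cases n with
  | zero => simp [P'_zero]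
  | succ m =>
    rw [Nat.sum_antidiagonal_eq_sum_range_succ (fun i j => P' i * Z j), sum_range_succ',
      sum_range_succ, P'_succ]
    simp only [P'_zero, zero_mul, add_zero, Nat.add_sub_add_right, Nat.sub_self]
    rw [show Z 0 = 1 from rfl, mul_one]
    abel

lemma mu_Z (n : ℕ) : mu (Z n) = ∑ p ∈ antidiagonal n, Z p.1 ⊗ₜ[ℤ] Z p.2 := by
  cases n with
  | zero => simp [Z, Algebra.TensorProduct.one_def]
  | succ m =>
    rw [Nat.sum_antidiagonal_eq_sum_range_succ (fun a b => Z a ⊗ₜ[ℤ] Z b)]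
    exact FreeAlgebra.lift_ι_apply _ _

lemma sum_antidiagonal_P'_tmul_one_mul_mu_Z (n : ℕ) :
    ∑ p ∈ antidiagonal n, (P' p.1 ⊗ₜ[ℤ] 1) * mu (Z p.2) =
      ∑ p ∈ antidiagonal n, p.1 • Z p.1 ⊗ₜ[ℤ] Z p.2 := by
  simp only [mu_Z, mul_sum, Algebra.TensorProduct.tmul_mul_tmul, one_mul]
  rw [sum_antidiagonal_sum_antidiagonal_snd n fun i a b => (P' i * Z a) ⊗ₜ[ℤ] Z b]
  simp only [← sum_tmul, sum_antidiagonal_P'_mul_Z, smul_tmul']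

lemma sum_antidiagonal_one_tmul_P'_mul_mu_Z (n : ℕ) :
    ∑ p ∈ antidiagonal n, (1 ⊗ₜ[ℤ] P' p.1) * mu (Z p.2) =
      ∑ p ∈ antidiagonal n, p.2 • Z p.1 ⊗ₜ[ℤ] Z p.2 := by
  simp only [mu_Z, mul_sum, Algebra.TensorProduct.tmul_mul_tmul, one_mul]
  rw [sum_antidiagonal_sum_antidiagonal_snd_left_comm n fun i a b => Z a ⊗ₜ[ℤ] (P' i * Z b)]
  simp only [← tmul_sum, sum_antidiagonal_P'_mul_Z, tmul_smul]
  -- `tmul_smul` produces the tensor product's own `ℕ`-action, defeq to the one in the statement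
  rfl

lemma sum_antidiagonal_primitive_mul_mu_Z (n : ℕ) :
    ∑ p ∈ antidiagonal n, (P' p.1 ⊗ₜ[ℤ] 1 + 1 ⊗ₜ[ℤ] P' p.1) * mu (Z p.2) =
      mu (∑ p ∈ antidiagonal n, P' p.1 * Z p.2) := by
  rw [sum_antidiagonal_P'_mul_Z, map_nsmul, mu_Z, ← sum_nsmul]
  simp only [add_mul, sum_add_distrib]
  rw [sum_antidiagonal_P'_tmul_one_mul_mu_Z, sum_antidiagonal_one_tmul_P'_mul_mu_Z,
    ← sum_add_distrib]
  refine sum_congr rfl fun p hp => ?_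
  rw [← add_smul, HasAntidiagonal.mem_antidiagonal.mp hp]

theorem stmt_6_general (n : ℕ) :
    mu (P' n) = P' n ⊗ₜ[ℤ] 1 + 1 ⊗ₜ[ℤ] P' n := by
  induction n using Nat.strong_induction_on with | _ n ih =>
  cases n with
  | zero => simp [P'_zero]
  | succ m =>
    have h := sum_antidiagonal_primitive_mul_mu_Z (m + 1)
    rw [map_sum, Nat.sum_antidiagonal_succ', Nat.sum_antidiagonal_succ'] at h
    have hlower : ∑ p ∈ antidiagonal m, mu (P' p.1 * Z (p.2 + 1)) =
        ∑ p ∈ antidiagonal m, (P' p.1 ⊗ₜ[ℤ] 1 + 1 ⊗ₜ[ℤ] P' p.1) * mu (Z (p.2 + 1)) :=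
      sum_congr rfl fun p hp => by rw [map_mul, ih p.1 (Nat.antidiagonal.fst_lt hp)]
    rw [hlower, add_left_inj] at h
    simpa only [Z, map_one, mul_one] using h.symm

/-- Proposition 4.3: the elements `P' n` are primitive elements of `NSymm`. -/
theorem stmt_6 (n : ℕ) (hn : 1 ≤ n) :
    mu (P' n) = P' n ⊗ₜ[ℤ] 1 + 1 ⊗ₜ[ℤ] P' n :=
  stmt_6_general n
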